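/- arXiv:math/0611616 — 13 statements merged into one kernel-verified Lean document; each statement's English description precedes it below -/
import Mathlib

section
/- Let Γ be a finite simple graph and let S be a global defensive k-alliance of minimum cardinality in Γ (so |S| = γ_k^a(Γ)). If W ⊆ S is a dominating set in Γ, then for every integer r with 0 ≤ r ≤ γ_k^a(Γ) − |W|, the graph Γ has a global defensive (k−2r)-alliance and γ_{k−2r}^a(Γ) + r ≤ γ_k^a(Γ). -/
/-- Number of neighbors that `v` has in `S`. -/
noncomputable def SimpleGraph.nbrCount {V : Type*} (G : SimpleGraph V) (S : Set V) (v : V) : ℕ :=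
  (S ∩ {u | G.Adj v u}).ncard

/-- Degree of a vertex, counted via `ncard`. -/
noncomputable def SimpleGraph.degN {V : Type*} (G : SimpleGraph V) (v : V) : ℕ :=
  {u | G.Adj v u}.ncard

/-- `S` is a defensive `k`-alliance. -/
def SimpleGraph.IsDefensiveAlliance {V : Type*} (G : SimpleGraph V) (k : ℤ) (S : Set V) : Prop :=
  S.Nonempty ∧ ∀ v ∈ S, (G.nbrCount Sᶜ v : ℤ) + k ≤ (G.nbrCount S v : ℤ)

/-- `S` is a dominating set. -/
def SimpleGraph.IsDominating {V : Type*} (G : SimpleGraph V) (S : Set V) : Prop :=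
  ∀ v ∈ Sᶜ, ∃ u ∈ S, G.Adj v u

/-- `S` is a global defensive `k`-alliance. -/
def SimpleGraph.IsGlobalDefensiveAlliance {V : Type*} (G : SimpleGraph V) (k : ℤ) (S : Set V) : Prop :=
  G.IsDefensiveAlliance k S ∧ G.IsDominating S

/-- Global defensive `k`-alliance number. -/
noncomputable def SimpleGraph.globalDefensiveAllianceNumber {V : Type*} (G : SimpleGraph V) (k : ℤ) : ℕ :=
  sInf {m | ∃ S : Set V, G.IsGlobalDefensiveAlliance k S ∧ S.ncard = m}

theorem global_defensive_alliance_reduction {V : Type*} [Fintype V] (G : SimpleGraph V)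
    (k : ℤ) (S W : Set V)
    (hS : G.IsGlobalDefensiveAlliance k S)
    (hmin : S.ncard = G.globalDefensiveAllianceNumber k)
    (hWS : W ⊆ S) (hW : G.IsDominating W)
    (r : ℕ) (hr : (r : ℤ) ≤ (G.globalDefensiveAllianceNumber k : ℤ) - W.ncard) :
    (∃ S' : Set V, G.IsGlobalDefensiveAlliance (k - 2 * r) S') ∧
      G.globalDefensiveAllianceNumber (k - 2 * r) + r ≤ G.globalDefensiveAllianceNumber k := by
  obtain ⟨⟨hSne, hSdef⟩, hSdom⟩ := hS
  have hWcard : W.ncard ≤ S.ncard := Set.ncard_le_ncard hWS S.toFinite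
  have hdiff : (S \ W).ncard = S.ncard - W.ncard := Set.ncard_diff hWS
  have hr' : r ≤ (S \ W).ncard := by omega
  obtain ⟨X, hXsub, hXcard⟩ := Set.exists_subset_card_eq hr'
  set S' := S \ X with hS'def
  have hXS : X ⊆ S := hXsub.trans Set.diff_subset
  have hWS' : W ⊆ S' := fun w hw => ⟨hWS hw, fun hx => (hXsub hx).2 hw⟩
  have hWne : W.Nonempty := by
    rcases hSne with ⟨v, hv⟩
    by_cases h : v ∈ W
    · exact ⟨v, h⟩
    · obtain ⟨u, hu, _⟩ := hW v h
      exact ⟨u, hu⟩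
  have hS'ne : S'.Nonempty := hWne.mono hWS'
  have halliance : G.IsGlobalDefensiveAlliance (k - 2 * r) S' := by
    refine ⟨⟨hS'ne, ?_⟩, ?_⟩
    · intro v hv
      have h1 : G.nbrCount S'ᶜ v ≤ G.nbrCount Sᶜ v + r := by
        have hsub : (S'ᶜ ∩ {u | G.Adj v u}) ⊆ (Sᶜ ∩ {u | G.Adj v u}) ∪ X := by
          intro u ⟨hu1, hu2⟩
          by_cases hx : u ∈ X
          · exact Or.inr hx
          · exact Or.inl ⟨fun hus => hu1 ⟨hus, hx⟩, hu2⟩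
        calc G.nbrCount S'ᶜ v ≤ ((Sᶜ ∩ {u | G.Adj v u}) ∪ X).ncard :=
              Set.ncard_le_ncard hsub (Set.toFinite _)
          _ ≤ (Sᶜ ∩ {u | G.Adj v u}).ncard + X.ncard := Set.ncard_union_le _ _
          _ = G.nbrCount Sᶜ v + r := by rw [hXcard]; rfl
      have h2 : G.nbrCount S v ≤ G.nbrCount S' v + r := by
        have hsub : (S ∩ {u | G.Adj v u}) ⊆ (S' ∩ {u | G.Adj v u}) ∪ X := by
          intro u ⟨hu1, hu2⟩
          by_cases hx : u ∈ X
          · exact Or.inr hx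
          · exact Or.inl ⟨⟨hu1, hx⟩, hu2⟩
        calc G.nbrCount S v ≤ ((S' ∩ {u | G.Adj v u}) ∪ X).ncard :=
              Set.ncard_le_ncard hsub (Set.toFinite _)
          _ ≤ (S' ∩ {u | G.Adj v u}).ncard + X.ncard := Set.ncard_union_le _ _
          _ = G.nbrCount S' v + r := by rw [hXcard]; rfl
      have h3 := hSdef v hv.1
      omega
    · intro v hv
      have hvW : v ∉ W := fun h => hv (hWS' h)
      obtain ⟨u, hu, hadj⟩ := hW v hvW
      exact ⟨u, hWS' hu, hadj⟩
  have hcard : S'.ncard = S.ncard - r := by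
    rw [hS'def, Set.ncard_diff hXS, hXcard]
  have hle : G.globalDefensiveAllianceNumber (k - 2 * r) ≤ S'.ncard :=
    Nat.sInf_le ⟨S', halliance, rfl⟩
  have hrS : r ≤ S.ncard := by omega
  exact ⟨⟨S', halliance⟩, by omega⟩
end

section
/- Let Γ be a finite simple graph, let S be a defensive k-alliance in Γ, and let X ⊆ S with |X| = r and S \ X nonempty. Then S \ X is a defensive (k−2r)-alliance in Γ. -/
lemma nbr_union_disj {V : Type*} [Fintype V] (G : SimpleGraph V) (A B : Set V) (v : V)
    (h : Disjoint A B) : G.nbrCount (A ∪ B) v = G.nbrCount A v + G.nbrCount B v := by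
  unfold SimpleGraph.nbrCount
  rw [Set.union_inter_distrib_right]
  exact Set.ncard_union_eq (h.mono Set.inter_subset_left Set.inter_subset_left)
    (Set.toFinite _) (Set.toFinite _)

theorem defensive_alliance_remove_subset {V : Type*} [Fintype V] (G : SimpleGraph V)
    (k : ℤ) (S X : Set V) (r : ℕ)
    (hS : G.IsDefensiveAlliance k S) (hX : X ⊆ S) (hr : X.ncard = r)
    (hne : (S \ X).Nonempty) :
    G.IsDefensiveAlliance (k - 2 * r) (S \ X) := by
  refine ⟨hne, fun v hv => ?_⟩
  have hvS : v ∈ S := hv.1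
  have hmain := hS.2 v hvS
  have hScomp : (S \ X)ᶜ = Sᶜ ∪ X := by
    ext x
    by_cases hx : x ∈ X <;> by_cases hs : x ∈ S <;> first | simp [hx, hs, hX hx] | simp [hx, hs]
  have h1 : G.nbrCount (S \ X)ᶜ v = G.nbrCount Sᶜ v + G.nbrCount X v := by
    rw [hScomp, nbr_union_disj]
    exact Set.disjoint_compl_left_iff_subset.mpr hX
  have h2 : G.nbrCount S v = G.nbrCount (S \ X) v + G.nbrCount X v := by
    conv_lhs => rw [← Set.diff_union_of_subset hX]
    exact nbr_union_disj G _ _ _ (Set.disjoint_sdiff_right (s := X) (t := S)).symm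
  have h3 : G.nbrCount X v ≤ r := by
    rw [← hr]
    exact Set.ncard_le_ncard Set.inter_subset_left (Set.toFinite _)
  rw [h1]
  rw [h2] at hmain
  push_cast at hmain ⊢
  omega
end

section
/- For the complete graph K_n on n vertices and every integer k with 1−n ≤ k ≤ n−1, the global defensive k-alliance number satisfies γ_k^a(K_n) = ⌈(n+k+1)/2⌉. -/
/-!
In `Kₙ` a vertex of `S` has `|S| - 1` neighbours inside `S` and `n - |S|` outside, so `S` is a
defensive `k`-alliance iff `n + k + 1 ≤ 2|S|`, and every nonempty set dominates. The sizes of global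
defensive `k`-alliances are therefore the integers between `⌈(n + k + 1)/2⌉` and `n`, a range that the
bounds on `k` make nonempty and free of `0`.
-/

namespace SimpleGraph

variable {V : Type*}

lemma top_nbrCount_of_mem [Finite V] {S : Set V} {v : V} (hv : v ∈ S) :
    (⊤ : SimpleGraph V).nbrCount S v = S.ncard - 1 := by
  have : S ∩ {u | (⊤ : SimpleGraph V).Adj v u} = S \ {v} := by
    ext u; simp [eq_comm, and_comm]
  rw [nbrCount, this, Set.ncard_sdiff_singleton_of_mem hv]

lemma top_nbrCount_of_notMem {S : Set V} {v : V} (hv : v ∉ S) :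
    (⊤ : SimpleGraph V).nbrCount S v = S.ncard := by
  have : S ∩ {u | (⊤ : SimpleGraph V).Adj v u} = S :=
    Set.inter_eq_left.2 fun u hu => (top_adj v u).2 fun h => hv (h ▸ hu)
  rw [nbrCount, this]

lemma top_isDominating {S : Set V} (hS : S.Nonempty) : (⊤ : SimpleGraph V).IsDominating S := by
  obtain ⟨u, hu⟩ := hS
  exact fun v hv => ⟨u, hu, fun h => hv (h ▸ hu)⟩

lemma top_isGlobalDefensiveAlliance_iff [Finite V] {k : ℤ} {S : Set V} :
    (⊤ : SimpleGraph V).IsGlobalDefensiveAlliance k S ↔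
      S.Nonempty ∧ (Nat.card V : ℤ) + k + 1 ≤ 2 * S.ncard := by
  refine ⟨fun ⟨⟨⟨v, hv⟩, hdef⟩, _⟩ => ⟨⟨v, hv⟩, ?_⟩,
    fun ⟨hS, hk⟩ => ⟨⟨hS, fun v hv => ?_⟩, top_isDominating hS⟩⟩
  all_goals
    have hpos : 0 < S.ncard := (Set.ncard_pos S.toFinite).2 ⟨v, hv⟩
    have hcompl := Set.ncard_add_ncard_compl S
  · have := hdef v hv
    rw [top_nbrCount_of_mem hv, top_nbrCount_of_notMem (Set.notMem_compl_iff.2 hv)] at this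
    omega
  · rw [top_nbrCount_of_mem hv, top_nbrCount_of_notMem (Set.notMem_compl_iff.2 hv)]
    omega

lemma top_globalDefensiveAllianceNumber_eq [Finite V] {k : ℤ} {c : ℕ} (hc : 1 ≤ c)
    (hcV : c ≤ Nat.card V) (hmin : ∀ m : ℕ, c ≤ m ↔ (Nat.card V : ℤ) + k + 1 ≤ 2 * m) :
    (⊤ : SimpleGraph V).globalDefensiveAllianceNumber k = c := by
  refine IsLeast.csInf_eq ⟨?_, ?_⟩
  · obtain ⟨S, -, hS⟩ := Set.exists_subset_card_eq (s := (Set.univ : Set V))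
      (Set.ncard_univ V ▸ hcV)
    refine ⟨S, top_isGlobalDefensiveAlliance_iff.2 ⟨?_, hS ▸ (hmin c).1 le_rfl⟩, hS⟩
    exact Set.nonempty_of_ncard_ne_zero (by omega)
  · rintro m ⟨S, hS, rfl⟩
    exact (hmin _).2 (top_isGlobalDefensiveAlliance_iff.1 hS).2

end SimpleGraph

theorem global_defensive_alliance_number_complete (n : ℕ) (k : ℤ)
    (h1 : 1 - (n : ℤ) ≤ k) (h2 : k ≤ (n : ℤ) - 1) :
    ((⊤ : SimpleGraph (Fin n)).globalDefensiveAllianceNumber k : ℤ) =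
      ⌈((n : ℚ) + k + 1) / 2⌉ := by
  have ceil_le_iff (m : ℤ) : ⌈((n : ℚ) + k + 1) / 2⌉ ≤ m ↔ (n : ℤ) + k + 1 ≤ 2 * m := by
    rw [Int.ceil_le, div_le_iff₀ two_pos, mul_comm]
    exact_mod_cast Iff.rfl
  have hc : 1 ≤ ⌈((n : ℚ) + k + 1) / 2⌉ := by
    have := (ceil_le_iff _).1 le_rfl
    omega
  obtain ⟨c, hceil⟩ := Int.eq_ofNat_of_zero_le (by omega : 0 ≤ ⌈((n : ℚ) + k + 1) / 2⌉)
  rw [hceil] at ceil_le_iff hc ⊢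
  have hcard : Nat.card (Fin n) = n := Nat.card_fin n
  refine congrArg _ (SimpleGraph.top_globalDefensiveAllianceNumber_eq (by omega) ?_ fun m => ?_)
  · have := (ceil_le_iff n).2 (by omega)
    omega
  · rw [hcard, ← ceil_le_iff, Nat.cast_le]
end

section
/- Let Γ be a finite simple graph of order n and let k be an integer. If S is a global defensive k-alliance in Γ, then |S| ≥ (√(4n + k²) + k)/2; in particular γ_k^a(Γ) ≥ (√(4n + k²) + k)/2. -/
open Classical in
lemma aux_bound {V : Type*} [Fintype V]
    (G : SimpleGraph V) (k : ℤ) (S : Set V)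
    (hS : G.IsGlobalDefensiveAlliance k S) :
    (Real.sqrt (4 * (Fintype.card V) + (k : ℝ) ^ 2) + k) / 2 ≤ (S.ncard : ℝ) := by
  classical
  obtain ⟨⟨hne, hdef⟩, hdom⟩ := hS
  set s := S.ncard with hs
  -- each v ∈ S has nbrCount S v ≤ s - 1, i.e. nbrCount S v + 1 ≤ s
  have hfin : S.Finite := S.toFinite
  have hnbr : ∀ v ∈ S, G.nbrCount S v + 1 ≤ s := by
    intro v hv
    have hsub : insert v (S ∩ {u | G.Adj v u}) ⊆ S := by
      intro u hu
      rcases Set.mem_insert_iff.mp hu with h | h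
      · exact h ▸ hv
      · exact h.1
    have hvnot : v ∉ S ∩ {u | G.Adj v u} := fun h => G.irrefl h.2
    have := Set.ncard_le_ncard hsub hfin
    rwa [Set.ncard_insert_of_notMem hvnot (S ∩ _).toFinite] at this
  -- double counting: |Sᶜ| ≤ ∑_{v∈S} nbrCount Sᶜ v
  have hcover : Sᶜ.toFinset ⊆ S.toFinset.biUnion
      (fun v => (Sᶜ ∩ {u | G.Adj v u}).toFinset) := by
    intro u hu
    rw [Set.mem_toFinset] at hu
    obtain ⟨w, hw, hadj⟩ := hdom u hu
    refine Finset.mem_biUnion.mpr ⟨w, Set.mem_toFinset.mpr hw, ?_⟩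
    rw [Set.mem_toFinset]
    exact ⟨hu, hadj.symm⟩
  have hcount : Sᶜ.ncard ≤ ∑ v ∈ S.toFinset, G.nbrCount Sᶜ v := by
    have h1 := Finset.card_le_card hcover
    have h2 := Finset.card_biUnion_le (s := S.toFinset)
      (t := fun v => (Sᶜ ∩ {u | G.Adj v u}).toFinset)
    calc Sᶜ.ncard = Sᶜ.toFinset.card := (Set.ncard_eq_toFinset_card' _)
      _ ≤ _ := h1.trans h2
      _ = ∑ v ∈ S.toFinset, G.nbrCount Sᶜ v := by
          apply Finset.sum_congr rfl
          intro v _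
          rw [SimpleGraph.nbrCount, Set.ncard_eq_toFinset_card']
  -- key integer inequality: n ≤ s^2 - k*s
  have hcardS : (S.toFinset.card : ℤ) = (s : ℤ) := by
    rw [hs, Set.ncard_eq_toFinset_card']
  have hkey : (Fintype.card V : ℤ) ≤ (s : ℤ)^2 - k * s := by
    have hsum : (Sᶜ.ncard : ℤ) ≤ ∑ v ∈ S.toFinset, ((s : ℤ) - 1 - k) := by
      calc (Sᶜ.ncard : ℤ) ≤ ∑ v ∈ S.toFinset, (G.nbrCount Sᶜ v : ℤ) := by
            exact_mod_cast hcount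
        _ ≤ ∑ v ∈ S.toFinset, ((s : ℤ) - 1 - k) := by
            apply Finset.sum_le_sum
            intro v hv
            have hv' : v ∈ S := Set.mem_toFinset.mp hv
            have h1 := hdef v hv'
            have h2 := hnbr v hv'
            have h2' : (G.nbrCount S v : ℤ) + 1 ≤ (s : ℤ) := by exact_mod_cast h2
            linarith
    rw [Finset.sum_const, nsmul_eq_mul, hcardS] at hsum
    have hcompl : S.ncard + Sᶜ.ncard = Fintype.card V := by
      rw [← Nat.card_eq_fintype_card]; exact Set.ncard_add_ncard_compl S
    have : ((S.ncard : ℤ)) + (Sᶜ.ncard : ℤ) = (Fintype.card V : ℤ) := by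
      exact_mod_cast hcompl
    nlinarith [this]
  -- k ≤ s - 1
  have hks : k ≤ (s : ℤ) - 1 := by
    obtain ⟨v, hv⟩ := hne
    have h1 := hdef v hv
    have h2 : (G.nbrCount S v : ℤ) + 1 ≤ (s : ℤ) := by exact_mod_cast hnbr v hv
    have h3 : (0 : ℤ) ≤ (G.nbrCount Sᶜ v : ℤ) := Int.natCast_nonneg _
    linarith
  -- pass to reals
  have hkeyR : (Fintype.card V : ℝ) ≤ (s:ℝ)^2 - (k : ℝ) * (s:ℝ) := by
    exact_mod_cast hkey
  have hksR : (k : ℝ) ≤ (s:ℝ) - 1 := by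
    exact_mod_cast hks
  have hxpos : (0 : ℝ) ≤ (s:ℝ) := Nat.cast_nonneg _
  have hsq : Real.sqrt (4 * (Fintype.card V) + (k : ℝ)^2) ≤ 2 * (s:ℝ) - k := by
    rw [show (2 * (s:ℝ) - (k:ℝ)) = Real.sqrt ((2*(s:ℝ) - k)^2) from
      (Real.sqrt_sq (by linarith)).symm]
    apply Real.sqrt_le_sqrt
    nlinarith
  linarith

theorem global_defensive_alliance_sqrt_lower_bound {V : Type*} [Fintype V]
    (G : SimpleGraph V) (k : ℤ) (S : Set V)
    (hS : G.IsGlobalDefensiveAlliance k S) :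
    (Real.sqrt (4 * (Fintype.card V) + (k : ℝ) ^ 2) + k) / 2 ≤ (S.ncard : ℝ) ∧
    (Real.sqrt (4 * (Fintype.card V) + (k : ℝ) ^ 2) + k) / 2 ≤
      (G.globalDefensiveAllianceNumber k : ℝ) := by
  refine ⟨aux_bound G k S hS, ?_⟩
  have hne : (S.ncard) ∈ {m | ∃ T : Set V, G.IsGlobalDefensiveAlliance k T ∧ T.ncard = m} :=
    ⟨S, hS, rfl⟩
  have hmem := Nat.sInf_mem (Set.nonempty_of_mem hne)
  obtain ⟨T, hT, hTc⟩ := hmem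
  rw [SimpleGraph.globalDefensiveAllianceNumber, ← hTc]
  exact aux_bound G k T hT
end

section
/- Let Γ be a finite simple graph of order n with maximum degree d_1, and let k be an integer. If S is a global defensive k-alliance in Γ, then |S|·(⌊(d_1 − k)/2⌋ + 1) ≥ n; in particular γ_k^a(Γ) ≥ ⌈n / (⌊(d_1 − k)/2⌋ + 1)⌉. -/
/-- Minimum degree. -/
noncomputable def SimpleGraph.minDegN {V : Type*} (G : SimpleGraph V) : ℕ :=
  sInf (Set.range G.degN)

/-- Maximum degree. -/
noncomputable def SimpleGraph.maxDegN {V : Type*} (G : SimpleGraph V) : ℕ :=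
  sSup (Set.range G.degN)

lemma part1 {V : Type*} [Fintype V] (G : SimpleGraph V) (k : ℤ) (S : Set V)
    (hS : G.IsGlobalDefensiveAlliance k S) :
    (Fintype.card V : ℤ) ≤ (S.ncard : ℤ) * (((G.maxDegN : ℤ) - k) / 2 + 1) := by
  classical
  obtain ⟨⟨hne, hall⟩, hdom⟩ := hS
  set d1 : ℤ := (G.maxDegN : ℤ) with hd1
  have hdeg : ∀ v, (G.degN v : ℤ) ≤ d1 := by
    intro v
    exact_mod_cast Nat.cast_le.mpr
      (le_csSup (Set.Finite.bddAbove (Set.finite_range _)) ⟨v, rfl⟩)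
  have hsplit : ∀ v, G.nbrCount S v + G.nbrCount Sᶜ v = G.degN v := by
    intro v
    unfold SimpleGraph.nbrCount SimpleGraph.degN
    rw [← Set.ncard_union_eq ?_ (Set.toFinite _) (Set.toFinite _)]
    · congr 1; ext u; by_cases h : u ∈ S <;> simp [h]
    · exact Set.disjoint_of_subset Set.inter_subset_left Set.inter_subset_left
        (disjoint_compl_right)
  have hbound : ∀ v ∈ S, (G.nbrCount Sᶜ v : ℤ) ≤ (d1 - k) / 2 := by
    intro v hv
    rw [Int.le_ediv_iff_mul_le (by norm_num)]
    have h1 := hall v hv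
    have h2 : (G.nbrCount S v : ℤ) + G.nbrCount Sᶜ v = G.degN v := by
      exact_mod_cast congrArg (Nat.cast : ℕ → ℤ) (hsplit v)
    have h3 := hdeg v
    linarith
  set s : Finset V := S.toFinset with hs
  set t : Finset V := Sᶜ.toFinset with ht
  have hcard : Fintype.card V = s.card + t.card := by
    have h : t = sᶜ := by ext u; simp [hs, ht]
    rw [h]; exact (Finset.card_add_card_compl s).symm
  have hnbr : ∀ v, G.nbrCount Sᶜ v = (t.filter (fun u => G.Adj v u)).card := by
    intro v
    rw [SimpleGraph.nbrCount, Set.ncard_eq_toFinset_card']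
    congr 1; ext u; simp [ht]
  have hdomcount : t.card ≤ ∑ v ∈ s, (t.filter (fun u => G.Adj v u)).card := by
    have hcomm : ∑ v ∈ s, (t.filter fun u => G.Adj v u).card
        = ∑ u ∈ t, (s.filter fun v => G.Adj v u).card := by
      simp_rw [Finset.card_filter]
      exact Finset.sum_comm
    rw [hcomm]
    calc t.card = ∑ _u ∈ t, 1 := by simp
      _ ≤ ∑ u ∈ t, (s.filter fun v => G.Adj v u).card := by
          refine Finset.sum_le_sum fun u hu => ?_
          obtain ⟨w, hw, hadj⟩ := hdom u (by simpa [ht] using hu)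
          exact Finset.card_pos.mpr ⟨w, by simp [hs, hw, hadj.symm]⟩
  have hncard : (S.ncard : ℤ) = (s.card : ℤ) := by
    rw [Set.ncard_eq_toFinset_card']
  rw [hncard]
  have hsum : (t.card : ℤ) ≤ (s.card : ℤ) * ((d1 - k) / 2) := by
    calc (t.card : ℤ) ≤ ∑ v ∈ s, ((t.filter (fun u => G.Adj v u)).card : ℤ) := by
          exact_mod_cast hdomcount
      _ ≤ ∑ _v ∈ s, (d1 - k) / 2 := by
          refine Finset.sum_le_sum fun v hv => ?_
          rw [← hnbr v]
          exact hbound v (by simpa [hs] using hv)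
      _ = (s.card : ℤ) * ((d1 - k) / 2) := by
          rw [Finset.sum_const, nsmul_eq_mul]
  have := hcard
  push_cast [hcard]
  linarith

theorem global_defensive_alliance_maxdeg_lower_bound {V : Type*} [Fintype V]
    (G : SimpleGraph V) (k : ℤ) (S : Set V)
    (hS : G.IsGlobalDefensiveAlliance k S) :
    (Fintype.card V : ℤ) ≤ (S.ncard : ℤ) * (((G.maxDegN : ℤ) - k) / 2 + 1) ∧
    ⌈(Fintype.card V : ℚ) / ((((G.maxDegN : ℤ) - k) / 2 + 1 : ℤ) : ℚ)⌉ ≤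
      (G.globalDefensiveAllianceNumber k : ℤ) := by
  constructor
  · exact part1 G k S hS
  · -- positivity of D
    set D : ℤ := ((G.maxDegN : ℤ) - k) / 2 + 1 with hD
    have hkled : k ≤ (G.maxDegN : ℤ) := by
      obtain ⟨⟨⟨v0, hv0⟩, hall⟩, _⟩ := hS
      have h1 := hall v0 hv0
      have h2 : (G.nbrCount S v0 : ℤ) ≤ (G.degN v0 : ℤ) := by
        exact_mod_cast Set.ncard_le_ncard Set.inter_subset_right (Set.toFinite _)
      have h3' : G.degN v0 ≤ G.maxDegN :=
        le_csSup (Set.Finite.bddAbove (Set.finite_range _)) ⟨v0, rfl⟩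
      have h3 : (G.degN v0 : ℤ) ≤ (G.maxDegN : ℤ) := by exact_mod_cast h3'
      have h4 : (0 : ℤ) ≤ (G.nbrCount Sᶜ v0 : ℤ) := Int.natCast_nonneg _
      linarith
    have hDpos : 0 < D := by
      have : 0 ≤ ((G.maxDegN : ℤ) - k) / 2 := Int.ediv_nonneg (by linarith) (by norm_num)
      omega
    have hmem : G.globalDefensiveAllianceNumber k ∈
        {m | ∃ S' : Set V, G.IsGlobalDefensiveAlliance k S' ∧ S'.ncard = m} :=
      Nat.sInf_mem ⟨S.ncard, S, hS, rfl⟩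
    obtain ⟨S', hS', hcardS'⟩ := hmem
    have h1 := part1 G k S' hS'
    rw [hcardS'] at h1
    rw [Int.ceil_le]
    rw [div_le_iff₀ (by exact_mod_cast hDpos)]
    push_cast
    exact_mod_cast h1
end

section
/- Let Γ be a finite simple graph of size m (number of edges) whose two largest vertex degrees are d_1 ≥ d_2, and let k be an integer. If S is a global defensive k-alliance in the line graph L(Γ) of Γ, then |S|·(⌊(d_1 + d_2 − 2 − k)/2⌋ + 1) ≥ m; in particular γ_k^a(L(Γ)) ≥ ⌈m / (⌊(d_1 + d_2 − 2 − k)/2⌋ + 1)⌉. -/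
section Aux

variable {V : Type*} [Fintype V]

/-- Sum of two distinct degrees is at most `d₁ + d₂`. -/
lemma aux_deg_sum (G : SimpleGraph V) (d₁ d₂ : ℕ) (u v : V)
    (hu : G.degN u = d₁) (hv : G.degN v = d₂) (hle : d₂ ≤ d₁)
    (hmax : ∀ w : V, G.degN w ≤ d₁)
    (hsec : ∀ w : V, w ≠ u → w ≠ v → G.degN w ≤ d₂)
    {x y : V} (hxy : x ≠ y) : G.degN x + G.degN y ≤ d₁ + d₂ := by
  by_cases hx : x = u
  · subst hx
    have hy2 : G.degN y ≤ d₂ := by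
      by_cases hyv : y = v
      · subst hyv; omega
      · exact hsec y (Ne.symm hxy) hyv
    omega
  · by_cases hxv : x = v
    · subst hxv
      have := hmax y
      omega
    · have hx2 : G.degN x ≤ d₂ := hsec x hx hxv
      have := hmax y
      omega

/-- Degree bound in the line graph. -/
lemma aux_line_deg (G : SimpleGraph V) (d₁ d₂ : ℕ) (u v : V)
    (hu : G.degN u = d₁) (hv : G.degN v = d₂) (hle : d₂ ≤ d₁)
    (hmax : ∀ w : V, G.degN w ≤ d₁)
    (hsec : ∀ w : V, w ≠ u → w ≠ v → G.degN w ≤ d₂)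
    (e : G.edgeSet) :
    (G.lineGraph.degN e : ℤ) ≤ (d₁ : ℤ) + d₂ - 2 := by
  classical
  obtain ⟨ev, he⟩ := e
  revert he
  induction ev using Sym2.ind with
  | _ x y =>
  intro he
  have hxy : G.Adj x y := he
  have hxyne : x ≠ y := hxy.ne
  set e : G.edgeSet := ⟨s(x, y), he⟩ with hedef
  set N : Set G.edgeSet := {f | G.lineGraph.Adj e f} with hN
  set A : Set (Sym2 V) := (fun z => s(x, z)) '' ({z | G.Adj x z} \ {y}) with hA
  set B : Set (Sym2 V) := (fun z => s(y, z)) '' ({z | G.Adj y z} \ {x}) with hB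
  have hsub : (Subtype.val '' N) ⊆ A ∪ B := by
    rintro f ⟨g, hg, rfl⟩
    obtain ⟨hne, w, hwe, hwg⟩ := SimpleGraph.lineGraph_adj_iff_exists.mp hg
    have hwxy : w = x ∨ w = y := Sym2.mem_iff.mp hwe
    have hgne : (g : Sym2 V) ≠ s(x, y) := by
      intro h
      exact hne (Subtype.ext h.symm)
    rcases hwxy with rfl | rfl
    · left
      obtain ⟨z, hz⟩ := Sym2.mem_iff_exists.mp hwg
      have hadj : G.Adj w z := by
        have := g.prop
        rw [hz] at this
        exact this
      refine ⟨z, ⟨hadj, ?_⟩, hz.symm⟩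
      intro hzy
      apply hgne
      rw [hz, Set.mem_singleton_iff.mp hzy]
    · right
      obtain ⟨z, hz⟩ := Sym2.mem_iff_exists.mp hwg
      have hadj : G.Adj w z := by
        have := g.prop
        rw [hz] at this
        exact this
      refine ⟨z, ⟨hadj, ?_⟩, hz.symm⟩
      intro hzx
      apply hgne
      rw [hz, Set.mem_singleton_iff.mp hzx, Sym2.eq_swap]
  have hNcard : G.lineGraph.degN e = (Subtype.val '' N).ncard :=
    (Set.ncard_image_of_injective N Subtype.val_injective).symm
  have h1 : (Subtype.val '' N).ncard ≤ A.ncard + B.ncard :=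
    le_trans (Set.ncard_le_ncard hsub) (Set.ncard_union_le A B)
  have hAcard : A.ncard ≤ ({z | G.Adj x z} \ {y}).ncard := Set.ncard_image_le
  have hBcard : B.ncard ≤ ({z | G.Adj y z} \ {x}).ncard := Set.ncard_image_le
  have hdegx : G.degN x = {z | G.Adj x z}.ncard := rfl
  have hdegy : G.degN y = {z | G.Adj y z}.ncard := rfl
  have hAd : ({z | G.Adj x z} \ {y}).ncard = G.degN x - 1 := by
    rw [hdegx]; exact Set.ncard_diff_singleton_of_mem hxy
  have hBd : ({z | G.Adj y z} \ {x}).ncard = G.degN y - 1 := by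
    rw [hdegy]; exact Set.ncard_diff_singleton_of_mem hxy.symm
  have hdx : 0 < G.degN x := by
    rw [hdegx]; exact (Set.ncard_pos (Set.toFinite _)).mpr ⟨y, hxy⟩
  have hdy : 0 < G.degN y := by
    rw [hdegy]; exact (Set.ncard_pos (Set.toFinite _)).mpr ⟨x, hxy.symm⟩
  have hsum := aux_deg_sum G d₁ d₂ u v hu hv hle hmax hsec hxyne
  omega

/-- The key counting bound. -/
lemma aux_key (G : SimpleGraph V) (k : ℤ) (d₁ d₂ : ℕ) (u v : V)
    (hu : G.degN u = d₁) (hv : G.degN v = d₂) (hle : d₂ ≤ d₁)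
    (hmax : ∀ w : V, G.degN w ≤ d₁)
    (hsec : ∀ w : V, w ≠ u → w ≠ v → G.degN w ≤ d₂)
    (S : Set G.edgeSet)
    (hS : G.lineGraph.IsGlobalDefensiveAlliance k S) :
    (G.edgeSet.ncard : ℤ) ≤
      (S.ncard : ℤ) * (((d₁ : ℤ) + d₂ - 2 - k) / 2 + 1) := by
  classical
  obtain ⟨⟨hne, hdef⟩, hdom⟩ := hS
  set q : ℤ := ((d₁ : ℤ) + d₂ - 2 - k) / 2 with hq
  -- split of the degree
  have hsplit : ∀ s : G.edgeSet,
      G.lineGraph.nbrCount S s + G.lineGraph.nbrCount Sᶜ s = G.lineGraph.degN s := by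
    intro s
    have hU : {f | G.lineGraph.Adj s f} =
        (S ∩ {f | G.lineGraph.Adj s f}) ∪ (Sᶜ ∩ {f | G.lineGraph.Adj s f}) := by
      ext f
      by_cases hf : f ∈ S <;> simp [hf]
    have hdisj : Disjoint (S ∩ {f | G.lineGraph.Adj s f})
        (Sᶜ ∩ {f | G.lineGraph.Adj s f}) := by
      apply Set.disjoint_left.mpr
      rintro f ⟨hf1, -⟩ ⟨hf2, -⟩
      exact hf2 hf1
    rw [SimpleGraph.nbrCount, SimpleGraph.nbrCount, SimpleGraph.degN,
      ← Set.ncard_union_eq hdisj, ← hU]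
  -- bound on the boundary count
  have hqb : ∀ s ∈ S, (G.lineGraph.nbrCount Sᶜ s : ℤ) ≤ q := by
    intro s hs
    rw [hq, Int.le_ediv_iff_mul_le (by norm_num)]
    have h1 := hdef s hs
    have h2 := hsplit s
    have h3 := aux_line_deg G d₁ d₂ u v hu hv hle hmax hsec s
    have h2' : (G.lineGraph.nbrCount S s : ℤ) + G.lineGraph.nbrCount Sᶜ s
        = G.lineGraph.degN s := by exact_mod_cast congrArg (Nat.cast : ℕ → ℤ) h2
    linarith
  -- domination counting
  have hSfin : S.Finite := Set.toFinite S
  have hCfin : Sᶜ.Finite := Set.toFinite Sᶜ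
  have hsub : hCfin.toFinset ⊆ hSfin.toFinset.biUnion
      (fun s => (Set.toFinite (Sᶜ ∩ {f | G.lineGraph.Adj s f})).toFinset) := by
    intro t ht
    rw [Set.Finite.mem_toFinset] at ht
    obtain ⟨s, hsS, hadj⟩ := hdom t ht
    rw [Finset.mem_biUnion]
    exact ⟨s, (Set.Finite.mem_toFinset _).mpr hsS,
      (Set.Finite.mem_toFinset _).mpr ⟨ht, hadj.symm⟩⟩
  have hcount : Sᶜ.ncard ≤ ∑ s ∈ hSfin.toFinset, G.lineGraph.nbrCount Sᶜ s := by
    rw [Set.ncard_eq_toFinset_card Sᶜ hCfin]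
    refine le_trans (Finset.card_le_card hsub) (le_trans Finset.card_biUnion_le ?_)
    apply Finset.sum_le_sum
    intro s _
    rw [SimpleGraph.nbrCount, Set.ncard_eq_toFinset_card _ (Set.toFinite _)]
  have hcountZ : (Sᶜ.ncard : ℤ) ≤ (S.ncard : ℤ) * q := by
    calc (Sᶜ.ncard : ℤ) ≤ ∑ s ∈ hSfin.toFinset, (G.lineGraph.nbrCount Sᶜ s : ℤ) := by
          exact_mod_cast hcount
      _ ≤ ∑ s ∈ hSfin.toFinset, q := by
          apply Finset.sum_le_sum
          intro s hs
          exact hqb s ((Set.Finite.mem_toFinset _).mp hs)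
      _ = (S.ncard : ℤ) * q := by
          rw [Finset.sum_const, Set.ncard_eq_toFinset_card S hSfin]
          simp [mul_comm]
  have htot : S.ncard + Sᶜ.ncard = G.edgeSet.ncard := by
    rw [Set.ncard_add_ncard_compl S]
    exact Nat.card_coe_set_eq G.edgeSet
  have hexp : (S.ncard : ℤ) * (q + 1) = (S.ncard : ℤ) * q + S.ncard := by ring
  have htotZ : (S.ncard : ℤ) + Sᶜ.ncard = G.edgeSet.ncard := by exact_mod_cast htot
  linarith

end Aux

theorem global_defensive_alliance_line_graph_lower_bound {V : Type*} [Fintype V]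
    (G : SimpleGraph V) (k : ℤ) (d₁ d₂ : ℕ) (u v : V) (huv : u ≠ v)
    (hu : G.degN u = d₁) (hv : G.degN v = d₂) (hle : d₂ ≤ d₁)
    (hmax : ∀ w : V, G.degN w ≤ d₁)
    (hsec : ∀ w : V, w ≠ u → w ≠ v → G.degN w ≤ d₂)
    (S : Set G.edgeSet)
    (hS : G.lineGraph.IsGlobalDefensiveAlliance k S) :
    (G.edgeSet.ncard : ℤ) ≤
        (S.ncard : ℤ) * (((d₁ : ℤ) + d₂ - 2 - k) / 2 + 1) ∧
      ⌈(G.edgeSet.ncard : ℚ) / ((((d₁ : ℤ) + d₂ - 2 - k) / 2 + 1 : ℤ) : ℚ)⌉ ≤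
        (G.lineGraph.globalDefensiveAllianceNumber k : ℤ) := by
  have hkey := aux_key G k d₁ d₂ u v hu hv hle hmax hsec S hS
  refine ⟨hkey, ?_⟩
  set q : ℤ := ((d₁ : ℤ) + d₂ - 2 - k) / 2 with hqdef
  -- the edge set is nonempty
  have hm1 : 1 ≤ G.edgeSet.ncard := by
    obtain ⟨s, hs⟩ := hS.1.1
    have : G.edgeSet.Nonempty := ⟨s.val, s.prop⟩
    have := (Set.ncard_pos (Set.toFinite _)).mpr this
    omega
  -- q + 1 > 0
  have hqpos : 0 < q + 1 := by
    by_contra hq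
    push_neg at hq
    have h0 : (S.ncard : ℤ) * (q + 1) ≤ 0 :=
      mul_nonpos_of_nonneg_of_nonpos (by positivity) hq
    have : (1 : ℤ) ≤ G.edgeSet.ncard := by exact_mod_cast hm1
    linarith
  -- the infimum is attained
  have hAne : {m | ∃ S' : Set G.edgeSet,
      G.lineGraph.IsGlobalDefensiveAlliance k S' ∧ S'.ncard = m}.Nonempty :=
    ⟨S.ncard, S, hS, rfl⟩
  obtain ⟨S', hS', hcard⟩ := Nat.sInf_mem hAne
  have hkey' := aux_key G k d₁ d₂ u v hu hv hle hmax hsec S' hS'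
  have hγn : G.lineGraph.globalDefensiveAllianceNumber k = S'.ncard := hcard.symm
  rw [Int.ceil_le, hγn]
  have hqQ : (0 : ℚ) < ((q + 1 : ℤ) : ℚ) := by exact_mod_cast hqpos
  rw [div_le_iff₀ hqQ]
  exact_mod_cast hkey'
end

section
/- For any finite cubic (3-regular) graph Γ with at least one vertex, the global defensive (−1)-alliance number satisfies γ_{−1}^a(Γ) ≤ 2·γ(Γ), where γ(Γ) is the domination number of Γ. -/
/-- Domination number. -/
noncomputable def SimpleGraph.domNum {V : Type*} (G : SimpleGraph V) : ℕ :=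
  sInf {m | ∃ S : Set V, G.IsDominating S ∧ S.ncard = m}

/-- Total domination number. -/
noncomputable def SimpleGraph.totalDomNum {V : Type*} (G : SimpleGraph V) : ℕ :=
  sInf {m | ∃ S : Set V, (∀ v : V, ∃ u ∈ S, G.Adj v u) ∧ S.ncard = m}

theorem global_defensive_alliance_cubic_le_two_domination {V : Type*} [Fintype V]
    [Nonempty V] (G : SimpleGraph V) (hcubic : ∀ v : V, G.degN v = 3) :
    G.globalDefensiveAllianceNumber (-1) ≤ 2 * G.domNum := by
  classical
  have hne : ∀ v : V, ∃ u, G.Adj v u := by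
    intro v
    have h := hcubic v
    rw [SimpleGraph.degN] at h
    have : ({u | G.Adj v u}).Nonempty := Set.nonempty_of_ncard_ne_zero (by omega)
    exact this
  choose f hf using hne
  have hmemD : G.domNum ∈ {m | ∃ S : Set V, G.IsDominating S ∧ S.ncard = m} := by
    apply Nat.sInf_mem
    refine ⟨Fintype.card V, Set.univ, fun v hv => absurd hv (by simp), by simp [Set.ncard_univ]⟩
  obtain ⟨D, hDdom, hDcard⟩ := hmemD
  set S : Set V := D ∪ f '' D with hS
  have hDsub : D ⊆ S := Set.subset_union_left
  have hDne : D.Nonempty := by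
    by_contra h
    rw [Set.not_nonempty_iff_eq_empty] at h
    obtain ⟨v⟩ := ‹Nonempty V›
    obtain ⟨u, hu, _⟩ := hDdom v (by simp [h])
    simp [h] at hu
  have hnbr : ∀ v ∈ S, ∃ u ∈ S, G.Adj v u := by
    intro v hv
    rcases hv with hv | ⟨w, hw, rfl⟩
    · exact ⟨f v, Or.inr ⟨v, hv, rfl⟩, hf v⟩
    · exact ⟨w, Or.inl hw, (hf w).symm⟩
  have hcount : ∀ v : V, G.nbrCount S v + G.nbrCount Sᶜ v = 3 := by
    intro v
    have hcov : (S ∩ {u | G.Adj v u}) ∪ (Sᶜ ∩ {u | G.Adj v u}) = {u | G.Adj v u} := by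
      ext u; by_cases h : u ∈ S <;> simp [h]
    have hdisj : Disjoint (S ∩ {u | G.Adj v u}) (Sᶜ ∩ {u | G.Adj v u}) := by
      rw [Set.disjoint_left]
      rintro u ⟨hu, -⟩ ⟨hu', -⟩
      exact hu' hu
    have h3 := hcubic v
    rw [SimpleGraph.degN] at h3
    rw [SimpleGraph.nbrCount, SimpleGraph.nbrCount,
      ← Set.ncard_union_eq hdisj (Set.toFinite _) (Set.toFinite _), hcov, h3]
  have hmemS : S.ncard ∈
      {m | ∃ T : Set V, G.IsGlobalDefensiveAlliance (-1) T ∧ T.ncard = m} := by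
    refine ⟨S, ⟨⟨hDne.mono hDsub, ?_⟩, ?_⟩, rfl⟩
    · intro v hv
      obtain ⟨u, huS, hadj⟩ := hnbr v hv
      have h1 : 1 ≤ G.nbrCount S v := by
        rw [SimpleGraph.nbrCount]
        have : (S ∩ {u | G.Adj v u}).Nonempty := ⟨u, huS, hadj⟩
        have := Set.ncard_pos (Set.toFinite _) |>.mpr this
        omega
      have h2 := hcount v
      omega
    · intro v hv
      have hvD : v ∉ D := fun h => hv (hDsub h)
      obtain ⟨u, hu, hadj⟩ := hDdom v hvD
      exact ⟨u, hDsub hu, hadj⟩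
  have h1 : G.globalDefensiveAllianceNumber (-1) ≤ S.ncard := Nat.sInf_le hmemS
  have h2 : S.ncard ≤ 2 * D.ncard := by
    calc S.ncard ≤ D.ncard + (f '' D).ncard := Set.ncard_union_le _ _
    _ ≤ D.ncard + D.ncard := by
        exact Nat.add_le_add_left (Set.ncard_image_le (Set.toFinite _)) _
    _ = 2 * D.ncard := by ring
  omega
end

section
/- For any finite cubic (3-regular) graph Γ with at least one vertex, the global defensive (−1)-alliance number equals the total domination number: γ_{−1}^a(Γ) = γ_t(Γ). -/
lemma nbr_split {V : Type*} [Fintype V] (G : SimpleGraph V) (S : Set V) (v : V) :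
    G.nbrCount S v + G.nbrCount Sᶜ v = G.degN v := by
  unfold SimpleGraph.nbrCount SimpleGraph.degN
  rw [← Set.ncard_union_eq (Set.disjoint_of_subset Set.inter_subset_left
      Set.inter_subset_left disjoint_compl_right) (Set.toFinite _) (Set.toFinite _)]
  congr 1
  rw [← Set.union_inter_distrib_right, Set.union_compl_self, Set.univ_inter]

lemma nbr_pos_iff {V : Type*} [Fintype V] (G : SimpleGraph V) (S : Set V) (v : V) :
    1 ≤ G.nbrCount S v ↔ ∃ u ∈ S, G.Adj v u := by
  unfold SimpleGraph.nbrCount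
  rw [Nat.one_le_iff_ne_zero, Ne, Set.ncard_eq_zero (Set.toFinite _),
    ← Ne, ← Set.nonempty_iff_ne_empty]
  constructor
  · rintro ⟨u, hu, hadj⟩; exact ⟨u, hu, hadj⟩
  · rintro ⟨u, hu, hadj⟩; exact ⟨u, hu, hadj⟩

lemma gda_iff {V : Type*} [Fintype V] [Nonempty V] (G : SimpleGraph V)
    (hcubic : ∀ v : V, G.degN v = 3) (S : Set V) :
    G.IsGlobalDefensiveAlliance (-1) S ↔ ∀ v : V, ∃ u ∈ S, G.Adj v u := by
  constructor
  · rintro ⟨⟨_, hdef⟩, hdom⟩ v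
    by_cases hv : v ∈ S
    · have h1 := hdef v hv
      have h2 := nbr_split G S v
      rw [hcubic v] at h2
      rw [← nbr_pos_iff]
      omega
    · exact hdom v hv
  · intro htot
    obtain ⟨v₀⟩ := ‹Nonempty V›
    obtain ⟨u₀, hu₀, _⟩ := htot v₀
    refine ⟨⟨⟨u₀, hu₀⟩, fun v hv => ?_⟩, fun v _ => htot v⟩
    have h1 : 1 ≤ G.nbrCount S v := (nbr_pos_iff G S v).2 (htot v)
    have h2 := nbr_split G S v
    rw [hcubic v] at h2
    omega


theorem global_defensive_alliance_cubic_eq_total_domination {V : Type*} [Fintype V]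
    [Nonempty V] (G : SimpleGraph V) (hcubic : ∀ v : V, G.degN v = 3) :
    G.globalDefensiveAllianceNumber (-1) = G.totalDomNum := by
  unfold SimpleGraph.globalDefensiveAllianceNumber SimpleGraph.totalDomNum
  congr 1
  ext m
  simp only [Set.mem_setOf_eq]
  constructor
  · rintro ⟨S, hS, rfl⟩; exact ⟨S, (gda_iff G hcubic S).1 hS, rfl⟩
  · rintro ⟨S, hS, rfl⟩; exact ⟨S, (gda_iff G hcubic S).2 hS, rfl⟩
end

section
/- Let T be a finite tree of order n and let k be an integer. If S is a global defensive k-alliance in T such that the subgraph induced by S has exactly c connected components, then (3 − k)·|S| ≥ n + 2c; in particular |S| ≥ ⌈(n + 2c)/(3 − k)⌉ when k < 3. -/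
/-!
Count the edges between `S` and its complement. Domination provides at least `n - |S|` of them,
while summing the alliance condition over `S` bounds their number by `2 |E⟨S⟩| - k |S|`. As `⟨S⟩`
is a forest with `c` components, `|E⟨S⟩| = |S| - c`, whence `n - |S| ≤ 2 (|S| - c) - k |S|`.
-/

open Finset

namespace SimpleGraph

section Forest

variable {V : Type*} [Fintype V] {G : SimpleGraph V} [DecidableRel G.Adj]

lemma IsTree.sum_degree_add_two (hG : G.IsTree) : ∑ v, G.degree v + 2 = 2 * Fintype.card V := by
  rw [sum_degrees_eq_twice_card_edges, ← hG.card_edgeFinset]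
  ring

lemma ConnectedComponent.degree_toSimpleGraph (C : G.ConnectedComponent) (v : C)
    [Fintype (C.toSimpleGraph.neighborSet v)] :
    C.toSimpleGraph.degree v = G.degree v := by
  classical
  convert degree_induce_of_neighborSet_subset fun _ hw => C.mem_supp_of_adj_mem_supp v.2 hw <;>
    rfl

lemma IsAcyclic.sum_degree_add_two_mul_card_connectedComponent (hG : G.IsAcyclic) :
    ∑ v, G.degree v + 2 * Nat.card G.ConnectedComponent = 2 * Fintype.card V := by
  classical
  have hC (C : G.ConnectedComponent) : ∑ v : C, G.degree v + 2 = ∑ _v : C, 2 := by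
    rw [sum_const, card_univ, smul_eq_mul, mul_comm]
    simp_rw [← C.degree_toSimpleGraph]
    exact (hG.isTree_connectedComponent C).sum_degree_add_two
  have hfib (f : V → ℕ) : ∑ C : G.ConnectedComponent, ∑ v : C, f v = ∑ v, f v :=
    Fintype.sum_fiberwise G.connectedComponentMk f
  calc ∑ v, G.degree v + 2 * Nat.card G.ConnectedComponent
      = ∑ C : G.ConnectedComponent, (∑ v : C, G.degree v + 2) := by
        rw [sum_add_distrib, hfib (G.degree ·), sum_const, card_univ, Nat.card_eq_fintype_card,
          smul_eq_mul, mul_comm]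
    _ = ∑ C : G.ConnectedComponent, ∑ _v : C, 2 := sum_congr rfl fun C _ => hC C
    _ = 2 * Fintype.card V := by
        rw [hfib fun _ => 2, sum_const, card_univ, smul_eq_mul, mul_comm]

end Forest

section NbrCount

variable {V : Type*} {G : SimpleGraph V}

lemma degree_induce_eq_nbrCount (s : Set V) (v : s) [Fintype ((G.induce s).neighborSet v)] :
    (G.induce s).degree v = G.nbrCount s v := by
  rw [← card_neighborSet_eq_degree, nbrCount, ← Nat.card_coe_set_eq, ← Nat.card_eq_fintype_card]
  exact Nat.card_congr
    ⟨fun u => ⟨u.1, u.1.2, u.2⟩, fun u => ⟨⟨u, u.2.1⟩, u.2.2⟩, fun _ => rfl, fun _ => rfl⟩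

lemma IsAcyclic.sum_nbrCount_add_two_mul_card_connectedComponent_induce [Fintype V]
    (hG : G.IsAcyclic) (s : Finset V) :
    ∑ v ∈ s, G.nbrCount ↑s v + 2 * Nat.card (G.induce ↑s).ConnectedComponent = 2 * #s := by
  classical
  have := (hG.induce ↑s).sum_degree_add_two_mul_card_connectedComponent
  simp_rw [degree_induce_eq_nbrCount] at this
  rwa [← sum_coe_sort s, ← Fintype.card_coe s]

lemma IsDominating.card_compl_le_sum_nbrCount [Fintype V] [DecidableEq V] {s : Finset V}
    (h : G.IsDominating ↑s) : #sᶜ ≤ ∑ v ∈ sᶜ, G.nbrCount ↑s v := by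
  rw [card_eq_sum_ones]
  refine sum_le_sum fun v hv => ?_
  obtain ⟨u, hu, huv⟩ := h v (by simpa using hv)
  exact (Set.ncard_pos (Set.toFinite _)).mpr ⟨u, hu, huv⟩

lemma IsDefensiveAlliance.sum_nbrCount_compl_add_le {k : ℤ} {s : Finset V}
    (h : G.IsDefensiveAlliance k ↑s) :
    ∑ v ∈ s, (G.nbrCount (↑s)ᶜ v : ℤ) + k * #s ≤ ∑ v ∈ s, (G.nbrCount ↑s v : ℤ) :=
  calc ∑ v ∈ s, (G.nbrCount (↑s)ᶜ v : ℤ) + k * #s = ∑ v ∈ s, ((G.nbrCount (↑s)ᶜ v : ℤ) + k) := by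
        rw [sum_add_distrib, sum_const, nsmul_eq_mul, mul_comm]
    _ ≤ _ := sum_le_sum fun v hv => h.2 v hv

variable (G) [DecidableRel G.Adj]

lemma nbrCount_coe (s : Finset V) (v : V) : G.nbrCount ↑s v = #{u ∈ s | G.Adj v u} := by
  rw [nbrCount, ← Set.ncard_coe_finset, coe_filter]
  rfl

lemma sum_nbrCount_comm (s t : Finset V) :
    ∑ v ∈ s, G.nbrCount ↑t v = ∑ v ∈ t, G.nbrCount ↑s v := by
  simp only [nbrCount_coe, card_filter]
  rw [sum_comm]
  simp only [G.adj_comm]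

end NbrCount

end SimpleGraph

theorem global_defensive_alliance_tree_components_general {V : Type*} [Fintype V]
    (G : SimpleGraph V) (hac : G.IsAcyclic)
    (k : ℤ) (S : Set V) (hS : G.IsGlobalDefensiveAlliance k S)
    (c : ℕ) (hc : Nat.card (G.induce S).ConnectedComponent = c) :
    (Fintype.card V : ℤ) + 2 * c ≤ (3 - k) * (S.ncard : ℤ) ∧
      (k < 3 → ⌈((Fintype.card V : ℚ) + 2 * c) / (3 - (k : ℚ))⌉ ≤ (S.ncard : ℤ)) := by
  classical
  obtain ⟨s, rfl⟩ : ∃ s : Finset V, ↑s = S := ⟨S.toFinset, S.coe_toFinset⟩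
  have hdom := hS.2.card_compl_le_sum_nbrCount
  have hcut := G.sum_nbrCount_comm sᶜ s
  have halliance := hS.1.sum_nbrCount_compl_add_le
  have hforest := hac.sum_nbrCount_add_two_mul_card_connectedComponent_induce s
  have hcard := card_compl_add_card s
  rw [coe_compl] at hcut
  rw [hc] at hforest
  rw [Set.ncard_coe_finset]
  have hmain : (Fintype.card V : ℤ) + 2 * c ≤ (3 - k) * #s := by
    zify at hdom hcut hforest hcard
    linarith
  refine ⟨hmain, fun hk => ?_⟩
  have hk' : (0 : ℚ) < 3 - k := by
    rw [sub_pos]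
    exact_mod_cast hk
  rw [Int.ceil_le, div_le_iff₀' hk']
  exact_mod_cast hmain

theorem global_defensive_alliance_tree_components {V : Type*} [Fintype V]
    (G : SimpleGraph V) (hT : G.Connected) (hac : G.IsAcyclic)
    (k : ℤ) (S : Set V) (hS : G.IsGlobalDefensiveAlliance k S)
    (c : ℕ) (hc : Nat.card (G.induce S).ConnectedComponent = c) :
    (Fintype.card V : ℤ) + 2 * c ≤ (3 - k) * (S.ncard : ℤ) ∧
      (k < 3 → ⌈((Fintype.card V : ℚ) + 2 * c) / (3 - (k : ℚ))⌉ ≤ (S.ncard : ℤ)) :=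
  global_defensive_alliance_tree_components_general G hac k S hS c hc
end

section
/- Let T be a finite tree of order n and let k be an integer with k < 3. Then every global defensive k-alliance S in T satisfies (3 − k)·|S| ≥ n + 2; in particular γ_k^a(T) ≥ ⌈(n + 2)/(3 − k)⌉. -/
section Aux
variable {V : Type*} [Fintype V] (G : SimpleGraph V)

private lemma nbrCount_eq_filter [DecidableEq V] [DecidableRel G.Adj]
    (S : Set V) [DecidablePred (· ∈ S)] (v : V) :
    G.nbrCount S v = (S.toFinset.filter (G.Adj v)).card := by
  classical
  rw [SimpleGraph.nbrCount, Set.ncard_eq_toFinset_card']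
  congr 1
  ext u
  simp

private lemma key_lemma (hT : G.Connected) (hac : G.IsAcyclic)
    (k : ℤ) (S : Set V) (hS : G.IsGlobalDefensiveAlliance k S) :
    (Fintype.card V : ℤ) + 2 ≤ (3 - k) * (S.ncard : ℤ) := by
  classical
  obtain ⟨⟨hne, hall⟩, hdom⟩ := hS
  set n := Fintype.card V
  set A := S.toFinset with hA
  set B := Sᶜ.toFinset with hB
  have hBA : B = Aᶜ := by simp [hA, hB, Set.toFinset_compl]
  -- cross-counting symmetry
  have cross : ∑ v ∈ B, (A.filter (G.Adj v)).card = ∑ v ∈ A, (B.filter (G.Adj v)).card := by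
    have h1 : ∀ (C D : Finset V), ∑ v ∈ C, (D.filter (G.Adj v)).card
        = ∑ v ∈ C, ∑ u ∈ D, if G.Adj v u then 1 else 0 := by
      intro C D; refine Finset.sum_congr rfl fun v _ => ?_
      rw [Finset.card_filter]
    rw [h1, h1, Finset.sum_comm]
    refine Finset.sum_congr rfl fun v _ => Finset.sum_congr rfl fun u _ => ?_
    simp [G.adj_comm]
  -- degree split
  have degsplit : ∀ v, G.degree v = (A.filter (G.Adj v)).card + (B.filter (G.Adj v)).card := by
    intro v
    rw [hBA]
    have : Aᶜ.filter (G.Adj v) = (Finset.filter (G.Adj v) Finset.univ).filter (fun u => u ∉ A) := by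
      ext u; simp [and_comm]
    rw [this]
    have : A.filter (G.Adj v) = (Finset.filter (G.Adj v) Finset.univ).filter (fun u => u ∈ A) := by
      ext u; simp [and_comm]
    rw [this, Finset.card_filter_add_card_filter_not]
    simp [SimpleGraph.degree, SimpleGraph.neighborFinset_eq_filter]
  -- total degree sum
  have hn1 : 1 ≤ n := by
    obtain ⟨v, _⟩ := hne
    exact Fintype.card_pos_iff.mpr ⟨v⟩
  have htree : G.IsTree := ⟨hT, hac⟩
  have hedges : G.edgeFinset.card + 1 = n := htree.card_edgeFinset
  have hsum : ∑ v, G.degree v = 2 * (n - 1) := by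
    rw [SimpleGraph.sum_degrees_eq_twice_card_edges]
    omega
  -- abbreviations
  set a := ∑ v ∈ A, (A.filter (G.Adj v)).card with ha
  set b := ∑ v ∈ A, (B.filter (G.Adj v)).card with hb
  set b' := ∑ v ∈ B, (A.filter (G.Adj v)).card with hb'
  set d := ∑ v ∈ B, (B.filter (G.Adj v)).card with hd
  have hsplit : a + b + (b' + d) = 2 * (n - 1) := by
    rw [← hsum, ← Finset.sum_add_sum_compl A (fun v => G.degree v), ← hBA]
    rw [ha, hb, hb', hd, ← Finset.sum_add_distrib, ← Finset.sum_add_distrib]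
    congr 1 <;> exact Finset.sum_congr rfl fun v _ => (degsplit v).symm
  -- domination: b' ≥ n - |S|
  have hcardA : A.card = S.ncard := (Set.ncard_eq_toFinset_card' S).symm
  have hcardB : B.card = n - S.ncard := by
    rw [hBA, Finset.card_compl, hcardA]
  have hdom' : B.card ≤ b' := by
    rw [hb']
    calc B.card = ∑ v ∈ B, 1 := by simp
    _ ≤ _ := by
      refine Finset.sum_le_sum fun v hv => ?_
      obtain ⟨u, hu, hadj⟩ := hdom v (by simpa [hB] using hv)
      exact Finset.card_pos.mpr ⟨u, by simp [hA, hu, hadj]⟩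
  -- alliance: b + k|S| ≤ a
  have halliance : (b : ℤ) + k * S.ncard ≤ a := by
    have : ∀ v ∈ A, ((B.filter (G.Adj v)).card : ℤ) + k ≤ (A.filter (G.Adj v)).card := by
      intro v hv
      have h1 := hall v (by simpa [hA] using hv)
      rwa [nbrCount_eq_filter, nbrCount_eq_filter] at h1
    calc (b : ℤ) + k * S.ncard
        = ∑ v ∈ A, (((B.filter (G.Adj v)).card : ℤ) + k) := by
          rw [hb, ← hcardA]
          push_cast
          rw [Finset.sum_add_distrib, Finset.sum_const, nsmul_eq_mul]
          ring
      _ ≤ ∑ v ∈ A, ((A.filter (G.Adj v)).card : ℤ) := Finset.sum_le_sum this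
      _ = a := by push_cast [ha]; ring
  have hbb' : b = b' := cross.symm
  -- combine over ℤ
  have hs_le : S.ncard ≤ n := by
    rw [← hcardA]; exact Finset.card_le_univ A
  have hZ : (a : ℤ) + b + b' + d = 2 * n - 2 := by
    have := hsplit
    have h2 : (2 : ℤ) * (↑(n-1)) = 2 * n - 2 := by
      have : ((n - 1 : ℕ) : ℤ) = n - 1 := by omega
      rw [this]; ring
    push_cast at this ⊢
    omega
  have hdomZ : (n : ℤ) - S.ncard ≤ b' := by
    have h1 : ((n - S.ncard : ℕ) : ℤ) ≤ b' := by exact_mod_cast hcardB ▸ hdom'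
    omega
  have : (b : ℤ) = b' := by exact_mod_cast hbb'
  nlinarith [halliance, hdomZ, hZ, this, sq_nonneg ((a:ℤ))]
end Aux

theorem global_defensive_alliance_tree_lower_bound {V : Type*} [Fintype V]
    (G : SimpleGraph V) (hT : G.Connected) (hac : G.IsAcyclic)
    (k : ℤ) (hk : k < 3) (S : Set V) (hS : G.IsGlobalDefensiveAlliance k S) :
    (Fintype.card V : ℤ) + 2 ≤ (3 - k) * (S.ncard : ℤ) ∧
      ⌈((Fintype.card V : ℚ) + 2) / (3 - (k : ℚ))⌉ ≤
        (G.globalDefensiveAllianceNumber k : ℤ) := by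
  classical
  refine ⟨key_lemma G hT hac k S hS, ?_⟩
  have hne : {m | ∃ S : Set V, G.IsGlobalDefensiveAlliance k S ∧ S.ncard = m}.Nonempty :=
    ⟨S.ncard, S, hS, rfl⟩
  obtain ⟨S', hS', hcard⟩ := Nat.sInf_mem hne
  have h2 := key_lemma G hT hac k S' hS'
  rw [SimpleGraph.globalDefensiveAllianceNumber, ← hcard]
  rw [Int.ceil_le]
  have hk3 : (0:ℚ) < 3 - (k:ℚ) := by
    have : (0:ℤ) < 3 - k := by linarith
    exact_mod_cast this
  rw [div_le_iff₀ hk3]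
  have h2Q : ((Fintype.card V : ℚ)) + 2 ≤ (3 - (k:ℚ)) * (S'.ncard : ℚ) := by
    exact_mod_cast h2
  push_cast
  linarith
end

section
/- Let Γ be a finite connected simple graph of order n with diameter D(Γ), and let k be an integer. If S is a global defensive k-alliance in Γ such that the subgraph induced by S is connected, then |S| ≥ (√(4(D(Γ) + n − 1) + (1 − k)²) + (k − 1))/2; in particular the global connected defensive k-alliance number satisfies γ_k^{ca}(Γ) ≥ ⌈(√(4(D(Γ) + n − 1) + (1 − k)²) + (k − 1))/2⌉. -/
/-- Global connected defensive `k`-alliance number. -/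
noncomputable def SimpleGraph.globalConnectedDefensiveAllianceNumber {V : Type*}
    (G : SimpleGraph V) (k : ℤ) : ℕ :=
  sInf {m | ∃ S : Set V, G.IsGlobalDefensiveAlliance k S ∧ (G.induce S).Connected ∧ S.ncard = m}

/-- The left-hand side is the larger root of `r ^ 2 + (1 - k) * r - a`. -/
lemma Real.sqrt_bound_le_of_le_mul {a r k : ℝ} (h : a ≤ r * (r + 1 - k)) (hk : k ≤ 2 * r + 1) :
    (√(4 * a + (1 - k) ^ 2) + (k - 1)) / 2 ≤ r := by
  have hroot : √(4 * a + (1 - k) ^ 2) ≤ 2 * r + 1 - k :=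
    Real.sqrt_le_iff.mpr ⟨by linarith, by linear_combination 4 * h⟩
  linarith

namespace SimpleGraph

variable {V : Type*} {G : SimpleGraph V} {k : ℤ} {S : Set V}

variable (G) in
lemma nbrCount_le_ncard_sub_one (hS : S.Finite) {v : V} (hv : v ∈ S) :
    G.nbrCount S v ≤ S.ncard - 1 := by
  rw [← Set.ncard_sdiff_singleton_of_mem hv]
  exact Set.ncard_le_ncard (fun u ⟨huS, hadj⟩ ↦ ⟨huS, (G.ne_of_adj hadj).symm⟩) hS.sdiff

namespace IsDefensiveAlliance

lemma nbrCount_compl_le (h : G.IsDefensiveAlliance k S) (hS : S.Finite) {v : V} (hv : v ∈ S) :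
    (G.nbrCount Sᶜ v : ℤ) ≤ S.ncard - 1 - k := by
  have hin := G.nbrCount_le_ncard_sub_one hS hv
  have hpos : 0 < S.ncard := (Set.ncard_pos hS).mpr ⟨v, hv⟩
  have := h.2 v hv
  omega

lemma le_ncard_sub_one (h : G.IsDefensiveAlliance k S) (hS : S.Finite) :
    k ≤ S.ncard - 1 := by
  obtain ⟨v, hv⟩ := h.1
  have := h.nbrCount_compl_le hS hv
  omega

end IsDefensiveAlliance

lemma IsDominating.ncard_compl_le_sum_nbrCount [Finite V]
    (h : G.IsDominating S) (hS : S.Finite) : Sᶜ.ncard ≤ ∑ v ∈ hS.toFinset, G.nbrCount Sᶜ v := by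
  have hcover : Sᶜ ⊆ ⋃ v ∈ hS.toFinset, Sᶜ ∩ {u | G.Adj v u} := by
    intro u hu
    obtain ⟨v, hv, hadj⟩ := h u hu
    exact Set.mem_biUnion (hS.mem_toFinset.mpr hv) ⟨hu, hadj.symm⟩
  exact (Set.ncard_le_ncard hcover).trans (hS.toFinset.set_ncard_biUnion_le _)

lemma IsGlobalDefensiveAlliance.card_le_ncard_mul [Fintype V]
    (h : G.IsGlobalDefensiveAlliance k S) :
    (Fintype.card V : ℤ) ≤ S.ncard * (S.ncard - k) := by
  have hS := S.toFinite
  have hsplit : (S.ncard : ℤ) + Sᶜ.ncard = Fintype.card V := by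
    exact_mod_cast (Set.ncard_add_ncard_compl S).trans Nat.card_eq_fintype_card
  have hsum : (Sᶜ.ncard : ℤ) ≤ ∑ v ∈ hS.toFinset, (G.nbrCount Sᶜ v : ℤ) := by
    exact_mod_cast h.2.ncard_compl_le_sum_nbrCount hS
  have hbound : ∑ v ∈ hS.toFinset, (G.nbrCount Sᶜ v : ℤ) ≤ S.ncard * (S.ncard - 1 - k) := by
    calc ∑ v ∈ hS.toFinset, (G.nbrCount Sᶜ v : ℤ)
        ≤ ∑ _v ∈ hS.toFinset, ((S.ncard : ℤ) - 1 - k) :=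
          Finset.sum_le_sum fun v hv ↦ h.1.nbrCount_compl_le hS (hS.mem_toFinset.mp hv)
      _ = S.ncard * (S.ncard - 1 - k) := by
          rw [Finset.sum_const, nsmul_eq_mul, ← Set.ncard_eq_toFinset_card S hS]
  linear_combination hsum + hbound - hsplit

variable (G) in
lemma edist_lt_ncard_of_induce_preconnected (hS : S.Finite) (hc : (G.induce S).Preconnected)
    {u v : V} (hu : u ∈ S) (hv : v ∈ S) : G.edist u v < S.ncard := by
  classical
  have := hS.fintype
  obtain ⟨p⟩ := hc ⟨u, hu⟩ ⟨v, hv⟩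
  calc G.edist u v ≤ (p.bypass.map (Embedding.induce S).toHom).length := G.edist_le _
    _ < S.ncard := by
      rw [Walk.length_map, ← Nat.card_coe_set_eq, Nat.card_eq_fintype_card]
      exact_mod_cast p.bypass_isPath.length_lt

lemma IsDominating.diam_le_ncard_add_one (h : G.IsDominating S)
    (hS : S.Finite) (hc : (G.induce S).Preconnected) : G.diam ≤ S.ncard + 1 := by
  have hnear : ∀ u, ∃ u' ∈ S, G.edist u u' ≤ 1 := by
    intro u
    by_cases hu : u ∈ S
    · exact ⟨u, hu, by simp⟩
    · obtain ⟨u', hu', hadj⟩ := h u hu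
      exact ⟨u', hu', edist_le_one_iff_adj_or_eq.mpr (.inl hadj)⟩
  refine ENat.toNat_le_of_le_natCast (ediam_le_of_edist_le fun u w ↦ ?_)
  obtain ⟨u', hu', hu⟩ := hnear u
  obtain ⟨w', hw', hw⟩ := hnear w
  have hmid : G.edist u' w' + 1 ≤ S.ncard :=
    Order.add_one_le_of_lt (G.edist_lt_ncard_of_induce_preconnected hS hc hu' hw')
  calc G.edist u w ≤ G.edist u u' + G.edist u' w' + G.edist w' w :=
        (G.edist_triangle (v := w')).trans (by gcongr; exact G.edist_triangle)
    _ ≤ 1 + G.edist u' w' + 1 := by gcongr; rwa [edist_comm]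
    _ ≤ S.ncard + 1 := by rw [add_comm 1]; gcongr

lemma IsGlobalDefensiveAlliance.diam_add_card_le [Fintype V]
    (h : G.IsGlobalDefensiveAlliance k S) (hc : (G.induce S).Preconnected) :
    (G.diam : ℤ) + Fintype.card V - 1 ≤ S.ncard * (S.ncard + 1 - k) := by
  have hdiam : (G.diam : ℤ) ≤ S.ncard + 1 := by
    exact_mod_cast h.2.diam_le_ncard_add_one S.toFinite hc
  linear_combination hdiam + h.card_le_ncard_mul

lemma IsGlobalDefensiveAlliance.sqrt_bound_le_ncard [Fintype V]
    (h : G.IsGlobalDefensiveAlliance k S) (hc : (G.induce S).Preconnected) :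
    (√(4 * ((G.diam : ℝ) + (Fintype.card V : ℝ) - 1) + (1 - (k : ℝ)) ^ 2) + ((k : ℝ) - 1)) / 2
      ≤ (S.ncard : ℝ) := by
  refine Real.sqrt_bound_le_of_le_mul ?_ ?_
  · exact_mod_cast h.diam_add_card_le hc
  · have : (k : ℝ) ≤ S.ncard - 1 := by exact_mod_cast h.1.le_ncard_sub_one S.toFinite
    linarith [(S.ncard.cast_nonneg : (0 : ℝ) ≤ S.ncard)]

end SimpleGraph

theorem global_connected_defensive_alliance_sqrt_bound_general {V : Type*} [Fintype V]
    (G : SimpleGraph V) (k : ℤ) (S : Set V)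
    (hS : G.IsGlobalDefensiveAlliance k S) (hSc : (G.induce S).Connected) :
    (Real.sqrt (4 * ((G.diam : ℝ) + (Fintype.card V : ℝ) - 1) + (1 - (k : ℝ)) ^ 2) +
        ((k : ℝ) - 1)) / 2 ≤ (S.ncard : ℝ) ∧
      ⌈(Real.sqrt (4 * ((G.diam : ℝ) + (Fintype.card V : ℝ) - 1) + (1 - (k : ℝ)) ^ 2) +
          ((k : ℝ) - 1)) / 2⌉ ≤ (G.globalConnectedDefensiveAllianceNumber k : ℤ) := by
  refine ⟨hS.sqrt_bound_le_ncard hSc.preconnected, ?_⟩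
  obtain ⟨T, hT, hTc, hTcard⟩ := Nat.sInf_mem (s := {m | ∃ T : Set V,
    G.IsGlobalDefensiveAlliance k T ∧ (G.induce T).Connected ∧ T.ncard = m})
    ⟨S.ncard, S, hS, hSc, rfl⟩
  rw [SimpleGraph.globalConnectedDefensiveAllianceNumber, Int.ceil_le, ← hTcard]
  exact_mod_cast hT.sqrt_bound_le_ncard hTc.preconnected

theorem global_connected_defensive_alliance_sqrt_bound {V : Type*} [Fintype V]
    (G : SimpleGraph V) (hconn : G.Connected) (k : ℤ) (S : Set V)
    (hS : G.IsGlobalDefensiveAlliance k S) (hSc : (G.induce S).Connected) :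
    (Real.sqrt (4 * ((G.diam : ℝ) + (Fintype.card V : ℝ) - 1) + (1 - (k : ℝ)) ^ 2) +
        ((k : ℝ) - 1)) / 2 ≤ (S.ncard : ℝ) ∧
      ⌈(Real.sqrt (4 * ((G.diam : ℝ) + (Fintype.card V : ℝ) - 1) + (1 - (k : ℝ)) ^ 2) +
          ((k : ℝ) - 1)) / 2⌉ ≤ (G.globalConnectedDefensiveAllianceNumber k : ℤ) :=
  global_connected_defensive_alliance_sqrt_bound_general G k S hS hSc
end

section
/- Let Γ be a finite connected simple graph of order n with diameter D(Γ) and maximum degree Δ, and let k be an integer. If S is a global defensive k-alliance in Γ such that the subgraph induced by S is connected, then |S|·(⌊(Δ − k)/2⌋ + 2) ≥ n + D(Γ) − 1; in particular the global connected defensive k-alliance number satisfies γ_k^{ca}(Γ) ≥ ⌈(n + D(Γ) − 1)/(⌊(Δ − k)/2⌋ + 2)⌉. -/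
/-! Every vertex of `S` has at most `⌊(Δ - k)/2⌋` neighbours outside `S`, and every vertex
outside `S` has one in `S`, so `n - |S| ≤ |S| ⌊(Δ - k)/2⌋`. Any two vertices are within distance
one of `S`, and two vertices of `S` are joined by a path inside `⟨S⟩` of length less than `|S|`,
so `D ≤ |S| + 1`. Adding the two bounds gives the theorem. -/

namespace SimpleGraph

variable {V : Type*} (G : SimpleGraph V)

lemma nbrCount_add_nbrCount_compl [Finite V] (S : Set V) (v : V) :
    G.nbrCount S v + G.nbrCount Sᶜ v = G.degN v := by
  rw [nbrCount, nbrCount, degN, ← Set.ncard_union_eq (disjoint_compl_right.mono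
    Set.inter_subset_left Set.inter_subset_left), ← Set.union_inter_distrib_right,
    Set.union_compl_self, Set.univ_inter]

lemma degN_le_maxDegN [Finite V] (v : V) : G.degN v ≤ G.maxDegN :=
  le_csSup (Set.finite_range G.degN).bddAbove ⟨v, rfl⟩

variable {G}

lemma IsDefensiveAlliance.nbrCount_compl_le_s17 [Finite V] {k : ℤ} {S : Set V}
    (hS : G.IsDefensiveAlliance k S) {v : V} (hv : v ∈ S) :
    (G.nbrCount Sᶜ v : ℤ) ≤ ((G.maxDegN : ℤ) - k) / 2 := by
  have hsplit : (G.nbrCount S v : ℤ) + G.nbrCount Sᶜ v = G.degN v := by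
    exact_mod_cast G.nbrCount_add_nbrCount_compl S v
  have hdeg : (G.degN v : ℤ) ≤ G.maxDegN := by exact_mod_cast G.degN_le_maxDegN v
  have := hS.2 v hv
  rw [Int.le_ediv_iff_mul_le two_pos]
  linarith

lemma IsDefensiveAlliance.le_maxDegN [Finite V] {k : ℤ} {S : Set V}
    (hS : G.IsDefensiveAlliance k S) : k ≤ G.maxDegN := by
  obtain ⟨v, hv⟩ := hS.1
  have hsplit := G.nbrCount_add_nbrCount_compl S v
  have hdeg := G.degN_le_maxDegN v
  have := hS.2 v hv
  omega

lemma IsDominating.ncard_compl_le_mul [Finite V] {S : Set V} (hS : G.IsDominating S) {b : ℕ}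
    (hb : ∀ v ∈ S, G.nbrCount Sᶜ v ≤ b) : Sᶜ.ncard ≤ S.ncard * b := by
  have hcover : Sᶜ ⊆ ⋃ v ∈ S.toFinite.toFinset, Sᶜ ∩ {u | G.Adj v u} := by
    intro u hu
    obtain ⟨v, hv, hadj⟩ := hS u hu
    exact Set.mem_biUnion (S.toFinite.mem_toFinset.2 hv) ⟨hu, hadj.symm⟩
  calc Sᶜ.ncard ≤ (⋃ v ∈ S.toFinite.toFinset, Sᶜ ∩ {u | G.Adj v u}).ncard :=
        Set.ncard_le_ncard hcover
    _ ≤ ∑ v ∈ S.toFinite.toFinset, G.nbrCount Sᶜ v := Finset.set_ncard_biUnion_le _ _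
    _ ≤ S.ncard * b := by
        rw [Set.ncard_eq_toFinset_card S]
        exact Finset.sum_le_card_nsmul _ _ _ fun v hv => hb v (S.toFinite.mem_toFinset.1 hv)

lemma IsDominating.exists_edist_le_one {S : Set V} (hS : G.IsDominating S) (x : V) :
    ∃ y ∈ S, G.edist x y ≤ 1 := by
  by_cases hx : x ∈ S
  · exact ⟨x, hx, by simp⟩
  · obtain ⟨y, hy, hadj⟩ := hS x hx
    exact ⟨y, hy, edist_le_one_iff_adj_or_eq.2 (Or.inl hadj)⟩

lemma edist_lt_ncard_of_connected_induce {S : Set V} (hfin : S.Finite)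
    (hS : (G.induce S).Connected) {y z : V} (hy : y ∈ S) (hz : z ∈ S) :
    G.edist y z < S.ncard := by
  classical
  have := hfin.fintype
  let p := (hS.preconnected ⟨y, hy⟩ ⟨z, hz⟩).some.toPath
  have hlen : G.edist y z ≤ p.1.length :=
    (edist_le (p.1.map (Embedding.induce S).toHom)).trans_eq (by rw [Walk.length_map])
  have hlt : p.1.length < S.ncard := by
    rw [Set.ncard_eq_toFinset_card']
    simpa using p.2.length_lt
  exact hlen.trans_lt (by exact_mod_cast hlt)

lemma IsDominating.ediam_le {S : Set V} (hfin : S.Finite) (hS : G.IsDominating S)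
    (hSc : (G.induce S).Connected) : G.ediam ≤ S.ncard + 1 := by
  refine ediam_le_of_edist_le fun u v => ?_
  obtain ⟨y, hy, huy⟩ := hS.exists_edist_le_one u
  obtain ⟨z, hz, hvz⟩ := hS.exists_edist_le_one v
  have hyz := Order.add_one_le_of_lt (edist_lt_ncard_of_connected_induce hfin hSc hy hz)
  calc G.edist u v ≤ G.edist u z + G.edist z v := G.edist_triangle
    _ ≤ G.edist u y + G.edist y z + G.edist z v := by gcongr; exact G.edist_triangle
    _ ≤ 1 + G.edist y z + 1 := by gcongr; rwa [edist_comm]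
    _ ≤ S.ncard + 1 := by rw [add_comm 1]; gcongr

lemma IsGlobalDefensiveAlliance.card_add_diam_le [Fintype V] {k : ℤ} {S : Set V}
    (hS : G.IsGlobalDefensiveAlliance k S) (hSc : (G.induce S).Connected) :
    (Fintype.card V : ℤ) + G.diam - 1 ≤ S.ncard * (((G.maxDegN : ℤ) - k) / 2 + 2) := by
  set f := ((G.maxDegN : ℤ) - k) / 2
  have hf : 0 ≤ f := by have := hS.1.le_maxDegN; omega
  have hcompl : (Sᶜ.ncard : ℤ) ≤ S.ncard * f := by
    have := hS.2.ncard_compl_le_mul fun v hv => Int.le_toNat hf |>.2 (hS.1.nbrCount_compl_le_s17 hv)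
    rw [← Int.toNat_of_nonneg hf]
    exact_mod_cast this
  have hdiam : G.diam ≤ S.ncard + 1 :=
    ENat.toNat_le_of_le_natCast (by exact_mod_cast hS.2.ediam_le S.toFinite hSc)
  have hcard : (Fintype.card V : ℤ) = S.ncard + Sᶜ.ncard := by
    rw [← Nat.card_eq_fintype_card, ← Set.ncard_add_ncard_compl S]
    push_cast; rfl
  linarith

end SimpleGraph

theorem global_connected_defensive_alliance_maxdeg_bound_general {V : Type*} [Fintype V]
    (G : SimpleGraph V) (k : ℤ) (S : Set V)
    (hS : G.IsGlobalDefensiveAlliance k S) (hSc : (G.induce S).Connected) :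
    (Fintype.card V : ℤ) + (G.diam : ℤ) - 1 ≤
        (S.ncard : ℤ) * (((G.maxDegN : ℤ) - k) / 2 + 2) ∧
      ⌈((Fintype.card V : ℚ) + (G.diam : ℚ) - 1) /
          ((((G.maxDegN : ℤ) - k) / 2 + 2 : ℤ) : ℚ)⌉ ≤
        (G.globalConnectedDefensiveAllianceNumber k : ℤ) := by
  refine ⟨hS.card_add_diam_le hSc, ?_⟩
  obtain ⟨T, hT, hTc, hcard⟩ := Nat.sInf_mem (s := {m | ∃ T : Set V,
    G.IsGlobalDefensiveAlliance k T ∧ (G.induce T).Connected ∧ T.ncard = m}) ⟨_, S, hS, hSc, rfl⟩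
  have hpos : (0 : ℤ) < ((G.maxDegN : ℤ) - k) / 2 + 2 := by have := hS.1.le_maxDegN; omega
  rw [SimpleGraph.globalConnectedDefensiveAllianceNumber, ← hcard, Int.ceil_le,
    div_le_iff₀ (by exact_mod_cast hpos)]
  exact_mod_cast hT.card_add_diam_le hTc

theorem global_connected_defensive_alliance_maxdeg_bound {V : Type*} [Fintype V]
    (G : SimpleGraph V) (hconn : G.Connected) (k : ℤ) (S : Set V)
    (hS : G.IsGlobalDefensiveAlliance k S) (hSc : (G.induce S).Connected) :
    (Fintype.card V : ℤ) + (G.diam : ℤ) - 1 ≤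
        (S.ncard : ℤ) * (((G.maxDegN : ℤ) - k) / 2 + 2) ∧
      ⌈((Fintype.card V : ℚ) + (G.diam : ℚ) - 1) /
          ((((G.maxDegN : ℤ) - k) / 2 + 2 : ℤ) : ℚ)⌉ ≤
        (G.globalConnectedDefensiveAllianceNumber k : ℤ) :=
  global_connected_defensive_alliance_maxdeg_bound_general G k S hS hSc
end

section
/- Let Γ be a finite connected simple graph of size m (number of edges) with diameter D(Γ), and let k be an integer. If S is a global defensive k-alliance in the line graph L(Γ) such that the subgraph of L(Γ) induced by S is connected, then |S| ≥ (√(4(D(Γ) + m − 2) + (1 − k)²) − (1 − k))/2; in particular γ_k^{ca}(L(Γ)) ≥ ⌈(√(4(D(Γ) + m − 2) + (1 − k)²) − (1 − k))/2⌉. -/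
section AuxLemmas

open SimpleGraph

private lemma reach_of_mem_edge {V : Type*} {G : SimpleGraph V} {S : Set G.edgeSet}
    {e : G.edgeSet} (he : e ∈ S) {u v : V}
    (hu : u ∈ (e : Sym2 V)) (hv : v ∈ (e : Sym2 V)) :
    (SimpleGraph.fromEdgeSet (Subtype.val '' S)).Reachable u v := by
  rcases eq_or_ne u v with rfl | hne
  · exact SimpleGraph.Reachable.refl u
  · refine SimpleGraph.Adj.reachable ?_
    rw [SimpleGraph.fromEdgeSet_adj]
    exact ⟨⟨e, he, (Sym2.mem_and_mem_iff hne).mp ⟨hu, hv⟩⟩, hne⟩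

private lemma reach_of_walk {V : Type*} {G : SimpleGraph V} {S : Set G.edgeSet}
    {e f : S} (p : (G.lineGraph.induce S).Walk e f) :
    ∀ u v : V, u ∈ ((e : G.edgeSet) : Sym2 V) → v ∈ ((f : G.edgeSet) : Sym2 V) →
      (SimpleGraph.fromEdgeSet (Subtype.val '' S)).Reachable u v := by
  induction p with
  | nil => exact fun u v hu hv => reach_of_mem_edge (Subtype.coe_prop _) hu hv
  | @cons a b c h p ih =>
    intro u v hu hv
    have hadj : G.lineGraph.Adj a b := h
    rw [SimpleGraph.lineGraph_adj_iff_exists] at hadj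
    obtain ⟨-, w, hw1, hw2⟩ := hadj
    exact (reach_of_mem_edge a.2 hu hw1).trans (ih w v hw2 hv)


private lemma dist_le_card_add_two {V : Type*} [Fintype V] {G : SimpleGraph V}
    (hconn : G.Connected) {k : ℤ} {S : Set G.edgeSet}
    (hS : G.lineGraph.IsGlobalDefensiveAlliance k S)
    (hSc : (G.lineGraph.induce S).Connected) (u v : V) :
    G.dist u v ≤ S.ncard + 2 := by
  classical
  rcases eq_or_ne u v with rfl | hne
  · simp [SimpleGraph.dist_self]
  have anchor : ∀ a b : V, G.Adj a b →
      ∃ w, (∃ f ∈ S, w ∈ ((f : G.edgeSet) : Sym2 V)) ∧ G.dist a w ≤ 1 := by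
    intro a b hab
    set E : G.edgeSet := ⟨s(a, b), G.mem_edgeSet.mpr hab⟩ with hE
    by_cases hES : E ∈ S
    · exact ⟨a, ⟨E, hES, by simp [hE]⟩, by simp [SimpleGraph.dist_self]⟩
    · obtain ⟨g, hgS, hadj⟩ := hS.2 E hES
      rw [SimpleGraph.lineGraph_adj_iff_exists] at hadj
      obtain ⟨-, w, hwE, hwg⟩ := hadj
      refine ⟨w, ⟨g, hgS, hwg⟩, ?_⟩
      have hw' : w = a ∨ w = b := Sym2.mem_iff.mp hwE
      rcases hw' with rfl | rfl
      · simp [SimpleGraph.dist_self]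
      · simpa using SimpleGraph.dist_le hab.toWalk
  -- find a neighbor of u and of v
  obtain ⟨pu⟩ := hconn.preconnected u v
  obtain ⟨pv⟩ := hconn.preconnected v u
  have hu' : ∃ u', G.Adj u u' := by
    cases pu with
    | nil => exact absurd rfl hne
    | cons h _ => exact ⟨_, h⟩
  have hv' : ∃ v', G.Adj v v' := by
    cases pv with
    | nil => exact absurd rfl hne.symm
    | cons h _ => exact ⟨_, h⟩
  obtain ⟨u', hadju⟩ := hu'
  obtain ⟨v', hadjv⟩ := hv'
  obtain ⟨w₁, ⟨f₁, hf₁, hw₁⟩, hd₁⟩ := anchor u u' hadju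
  obtain ⟨w₂, ⟨f₂, hf₂, hw₂⟩, hd₂⟩ := anchor v v' hadjv
  set H : SimpleGraph V := SimpleGraph.fromEdgeSet (Subtype.val '' S) with hHdef
  have hle : H ≤ G := by
    have himg : Subtype.val '' S ⊆ G.edgeSet := by rintro _ ⟨e, -, rfl⟩; exact e.2
    calc H ≤ SimpleGraph.fromEdgeSet G.edgeSet := SimpleGraph.fromEdgeSet_mono himg
    _ = G := G.fromEdgeSet_edgeSet
  have hreach : H.Reachable w₁ w₂ := by
    obtain ⟨p⟩ := hSc.preconnected ⟨f₁, hf₁⟩ ⟨f₂, hf₂⟩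
    exact reach_of_walk p w₁ w₂ hw₁ hw₂
  obtain ⟨q⟩ := hreach
  have hnodup : q.bypass.edges.Nodup := q.bypass_isPath.isTrail.edges_nodup
  have hlen : q.bypass.length ≤ S.ncard := by
    have h1 : q.bypass.edges.toFinset.card = q.bypass.length := by
      rw [List.toFinset_card_of_nodup hnodup, SimpleGraph.Walk.length_edges]
    have hsub : q.bypass.edges.toFinset ⊆ (Set.toFinite H.edgeSet).toFinset := by
      intro e he
      rw [Set.Finite.mem_toFinset]
      exact q.bypass.edges_subset_edgeSet (List.mem_toFinset.mp he)
    have h2 := Finset.card_le_card hsub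
    have h3 : (Set.toFinite H.edgeSet).toFinset.card = H.edgeSet.ncard :=
      (Set.ncard_eq_toFinset_card _ _).symm
    have h4 : H.edgeSet.ncard ≤ S.ncard := by
      rw [hHdef, SimpleGraph.edgeSet_fromEdgeSet]
      calc ((Subtype.val '' S) \ {e | e.IsDiag}).ncard ≤ (Subtype.val '' S).ncard :=
        Set.ncard_le_ncard Set.diff_subset (Set.toFinite _)
      _ = S.ncard := Set.ncard_image_of_injective _ Subtype.val_injective
    omega
  have hdist12 : G.dist w₁ w₂ ≤ S.ncard := by
    have h5 := SimpleGraph.dist_le (q.bypass.mapLe hle)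
    simpa using h5.trans (by simpa using hlen)
  have t1 : G.dist u v ≤ G.dist u w₁ + G.dist w₁ v := hconn.dist_triangle
  have t2 : G.dist w₁ v ≤ G.dist w₁ w₂ + G.dist w₂ v := hconn.dist_triangle
  have t3 : G.dist w₂ v = G.dist v w₂ := SimpleGraph.dist_comm ..
  omega


private lemma count_lemma {V : Type*} [Fintype V] {G : SimpleGraph V}
    {k : ℤ} {S : Set G.edgeSet}
    (hS : G.lineGraph.IsGlobalDefensiveAlliance k S) :
    (G.edgeSet.ncard : ℤ) ≤ (S.ncard : ℤ) + (S.ncard : ℤ) * ((S.ncard : ℤ) - 1 - k) ∧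
    k ≤ (S.ncard : ℤ) - 1 ∧ 1 ≤ S.ncard := by
  classical
  set L := G.lineGraph with hL
  have hSfin : S.Finite := Set.toFinite _
  have hCfin : Sᶜ.Finite := Set.toFinite _
  have hnbrS : ∀ v ∈ S, L.nbrCount S v + 1 ≤ S.ncard := by
    intro v hv
    have hsub : S ∩ {u | L.Adj v u} ⊆ S \ {v} := by
      rintro w ⟨hwS, hwa⟩
      refine ⟨hwS, ?_⟩
      simp only [Set.mem_singleton_iff]
      rintro rfl
      exact L.irrefl hwa
    have h1 : (S ∩ {u | L.Adj v u}).ncard ≤ (S \ {v}).ncard :=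
      Set.ncard_le_ncard hsub (Set.toFinite _)
    have h2 : (S \ {v}).ncard + 1 = S.ncard :=
      Set.ncard_diff_singleton_add_one hv (Set.toFinite _)
    have h3 : L.nbrCount S v = (S ∩ {u | L.Adj v u}).ncard := rfl
    omega
  have hx1 : 1 ≤ S.ncard := by
    have := (Set.ncard_pos (Set.toFinite _)).mpr hS.1.1
    omega
  have hk : k ≤ (S.ncard : ℤ) - 1 := by
    obtain ⟨v, hv⟩ := hS.1.1
    have h1 := hS.1.2 v hv
    have h2 := hnbrS v hv
    omega
  have cover : hCfin.toFinset ⊆ hSfin.toFinset.biUnion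
      (fun v => (Set.toFinite (Sᶜ ∩ {u | L.Adj v u})).toFinset) := by
    intro w hw
    rw [Set.Finite.mem_toFinset] at hw
    obtain ⟨z, hzS, hadj⟩ := hS.2 w hw
    rw [Finset.mem_biUnion]
    exact ⟨z, hSfin.mem_toFinset.mpr hzS,
      (Set.toFinite _).mem_toFinset.mpr ⟨hw, hadj.symm⟩⟩
  have hcard1 : Sᶜ.ncard ≤ ∑ v ∈ hSfin.toFinset, L.nbrCount Sᶜ v := by
    have h0 := (Finset.card_le_card cover).trans Finset.card_biUnion_le
    rw [Set.ncard_eq_toFinset_card _ hCfin]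
    refine h0.trans (le_of_eq (Finset.sum_congr rfl ?_))
    intro v _
    exact (Set.ncard_eq_toFinset_card _ _).symm
  have hsum : (∑ v ∈ hSfin.toFinset, (L.nbrCount Sᶜ v : ℤ)) ≤
      (S.ncard : ℤ) * ((S.ncard : ℤ) - 1 - k) := by
    have h0 := Finset.sum_le_card_nsmul hSfin.toFinset
      (fun v => (L.nbrCount Sᶜ v : ℤ)) ((S.ncard : ℤ) - 1 - k) ?_
    · have hcard : hSfin.toFinset.card = S.ncard := (Set.ncard_eq_toFinset_card _ _).symm
      rw [hcard] at h0
      simpa [nsmul_eq_mul] using h0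
    · intro v hv
      rw [Set.Finite.mem_toFinset] at hv
      have h1 := hS.1.2 v hv
      have h2 := hnbrS v hv
      show (L.nbrCount Sᶜ v : ℤ) ≤ (S.ncard : ℤ) - 1 - k
      omega
  have htot : S.ncard + Sᶜ.ncard = G.edgeSet.ncard := by
    have h0 := Set.ncard_add_ncard_compl S
    rwa [Nat.card_coe_set_eq] at h0
  have hfinal : (Sᶜ.ncard : ℤ) ≤ (S.ncard : ℤ) * ((S.ncard : ℤ) - 1 - k) := by
    have h0 : ((∑ v ∈ hSfin.toFinset, L.nbrCount Sᶜ v : ℕ) : ℤ) =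
        ∑ v ∈ hSfin.toFinset, (L.nbrCount Sᶜ v : ℤ) := by push_cast; rfl
    have h1 : ((Sᶜ.ncard : ℕ) : ℤ) ≤ ((∑ v ∈ hSfin.toFinset, L.nbrCount Sᶜ v : ℕ) : ℤ) := by
      exact_mod_cast hcard1
    rw [h0] at h1
    exact h1.trans hsum
  refine ⟨?_, hk, hx1⟩
  have := htot
  omega


private lemma main_bound {V : Type*} [Fintype V]
    (G : SimpleGraph V) (hconn : G.Connected) (k : ℤ) (S : Set G.edgeSet)
    (hS : G.lineGraph.IsGlobalDefensiveAlliance k S)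
    (hSc : (G.lineGraph.induce S).Connected) :
    (Real.sqrt (4 * ((G.diam : ℝ) + (G.edgeSet.ncard : ℝ) - 2) + (1 - (k : ℝ)) ^ 2) -
        (1 - (k : ℝ))) / 2 ≤ (S.ncard : ℝ) := by
  obtain ⟨hm, hk, hx1⟩ := count_lemma hS
  have hD : (G.diam : ℤ) ≤ (S.ncard : ℤ) + 2 := by
    have hne : Nonempty V := hconn.nonempty
    obtain ⟨u, v, huv⟩ := SimpleGraph.exists_dist_eq_diam (G := G)
    have h1 := dist_le_card_add_two hconn hS hSc u v
    omega
  have hxR : (1:ℝ) ≤ (S.ncard : ℝ) := by exact_mod_cast hx1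
  have hkR : (k:ℝ) ≤ (S.ncard : ℝ) - 1 := by
    have : (k:ℝ) ≤ ((S.ncard : ℤ) - 1 : ℤ) := by exact_mod_cast hk
    push_cast at this
    linarith
  have hmR : (G.edgeSet.ncard : ℝ) ≤
      (S.ncard : ℝ) + (S.ncard : ℝ) * ((S.ncard : ℝ) - 1 - k) := by
    have : ((G.edgeSet.ncard : ℤ) : ℝ) ≤
        (((S.ncard : ℤ) + (S.ncard : ℤ) * ((S.ncard : ℤ) - 1 - k) : ℤ) : ℝ) := by
      exact_mod_cast hm
    push_cast at this
    linarith
  have hDR : (G.diam : ℝ) ≤ (S.ncard : ℝ) + 2 := by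
    have : ((G.diam : ℤ) : ℝ) ≤ (((S.ncard : ℤ) + 2 : ℤ) : ℝ) := by exact_mod_cast hD
    push_cast at this
    linarith
  have hpos : 0 ≤ 2 * (S.ncard : ℝ) + (1 - (k:ℝ)) := by linarith
  have harg : 4 * ((G.diam : ℝ) + (G.edgeSet.ncard : ℝ) - 2) + (1 - (k : ℝ)) ^ 2
      ≤ (2 * (S.ncard : ℝ) + (1 - (k:ℝ))) ^ 2 := by nlinarith [hmR, hDR]
  have hs := Real.sqrt_le_sqrt harg
  rw [Real.sqrt_sq hpos] at hs
  linarith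

end AuxLemmas

theorem global_connected_defensive_alliance_line_graph_sqrt_bound {V : Type*} [Fintype V]
    (G : SimpleGraph V) (hconn : G.Connected) (k : ℤ) (S : Set G.edgeSet)
    (hS : G.lineGraph.IsGlobalDefensiveAlliance k S)
    (hSc : (G.lineGraph.induce S).Connected) :
    (Real.sqrt (4 * ((G.diam : ℝ) + (G.edgeSet.ncard : ℝ) - 2) + (1 - (k : ℝ)) ^ 2) -
        (1 - (k : ℝ))) / 2 ≤ (S.ncard : ℝ) ∧
      ⌈(Real.sqrt (4 * ((G.diam : ℝ) + (G.edgeSet.ncard : ℝ) - 2) + (1 - (k : ℝ)) ^ 2) -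
          (1 - (k : ℝ))) / 2⌉ ≤
        (G.lineGraph.globalConnectedDefensiveAllianceNumber k : ℤ) := by
  refine ⟨main_bound G hconn k S hS hSc, ?_⟩
  have hne : {m | ∃ S' : Set G.edgeSet, G.lineGraph.IsGlobalDefensiveAlliance k S' ∧
      (G.lineGraph.induce S').Connected ∧ S'.ncard = m}.Nonempty :=
    ⟨S.ncard, S, hS, hSc, rfl⟩
  have hmem := Nat.sInf_mem hne
  obtain ⟨S₀, hS₀, hSc₀, hcard₀⟩ := hmem
  have hb := main_bound G hconn k S₀ hS₀ hSc₀
  rw [hcard₀] at hb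
  rw [SimpleGraph.globalConnectedDefensiveAllianceNumber, Int.ceil_le]
  push_cast
  exact hb
end
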